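/- Under the setting of the abstract affine problem with Gateaux differentiable objective 𝒥 (with weakly-strongly continuous switching map u ↦ d𝒥(u) from weak-L¹ to L^∞), let u* ∈ 𝒰 be a critical point at which the optimality mapping Φ(u) = d𝒥(u) + N_𝒰(u) is strongly subregular with radius κ̂ > 0. For p > 1 and η > 0, consider the regularized problem min_{u∈𝒰} {𝒥(u) + (η/p)∫_X |u(x)|^p dμ}. Then for every ε > 0 there exists η_ε > 0 such that for any η < η_ε, every local minimizer u_η of the regularized problem satisfying ‖u_η − u*‖_{L¹} < κ̂ satisfies ‖u_η − u*‖_{L¹} < ε. -/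

import Mathlib

open MeasureTheory Filter Topology Set
open scoped ENNReal

/-- Weak convergence in `L¹(X; ℝᵐ)`. -/
def WeakL1Conv {X : Type*} [MeasurableSpace X] {m : ℕ} (μ : Measure X)
    (fn : ℕ → X → EuclideanSpace ℝ (Fin m)) (f : X → EuclideanSpace ℝ (Fin m)) : Prop :=
  ∀ g : X → EuclideanSpace ℝ (Fin m), Measurable g → (∃ C, ∀ x, ‖g x‖ ≤ C) →
    Tendsto (fun n => ∫ x, (inner ℝ (fn n x) (g x) : ℝ) ∂μ) atTop
      (𝓝 (∫ x, (inner ℝ (f x) (g x) : ℝ) ∂μ))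

/-- The feasible set `𝒰 = {u ∈ L¹(X;ℝᵐ) : u(x) ∈ U a.e.}`. -/
def Feasible {X : Type*} [MeasurableSpace X] {m : ℕ} (μ : Measure X)
    (U : Set (EuclideanSpace ℝ (Fin m))) : Set (X → EuclideanSpace ℝ (Fin m)) :=
  {u | Integrable u μ ∧ ∀ᵐ x ∂μ, u x ∈ U}

/-- Weak sequential continuity of a functional `𝒥` on the feasible set. -/
def WeakSeqContinuousOn {X : Type*} [MeasurableSpace X] {m : ℕ} (μ : Measure X)
    (U : Set (EuclideanSpace ℝ (Fin m))) (J : (X → EuclideanSpace ℝ (Fin m)) → ℝ) : Prop :=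
  ∀ (un : ℕ → X → EuclideanSpace ℝ (Fin m)) (u : X → EuclideanSpace ℝ (Fin m)),
    (∀ n, un n ∈ Feasible μ U) → u ∈ Feasible μ U → WeakL1Conv μ un u →
      Tendsto (fun n => J (un n)) atTop (𝓝 (J u))
open scoped ENNReal

/-- `ξ ∈ 𝒥'(u) + N_𝒰(u)`, i.e. `ξ − d𝒥(u)` lies in the normal cone to `𝒰` at `u`
(in the `L¹`–`L^∞` pairing), with `ξ ∈ L^∞(X;ℝᵐ)`. -/
def PhiMem {X : Type*} [MeasurableSpace X] {m : ℕ} (μ : Measure X)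
    (U : Set (EuclideanSpace ℝ (Fin m)))
    (DJ : (X → EuclideanSpace ℝ (Fin m)) → X → EuclideanSpace ℝ (Fin m))
    (u ξ : X → EuclideanSpace ℝ (Fin m)) : Prop :=
  MemLp ξ ⊤ μ ∧
    ∀ v ∈ Feasible μ U, ∫ x, (inner ℝ (ξ x - DJ u x) (v x - u x) : ℝ) ∂μ ≤ 0

/-- Strong metric subregularity of the optimality mapping `Φ = d𝒥 + N_𝒰` at `u*`
with radius `κ`. -/
def SubregAt {X : Type*} [MeasurableSpace X] {m : ℕ} (μ : Measure X)
    (U : Set (EuclideanSpace ℝ (Fin m)))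
    (DJ : (X → EuclideanSpace ℝ (Fin m)) → X → EuclideanSpace ℝ (Fin m))
    (ustar : X → EuclideanSpace ℝ (Fin m)) (κ : ℝ) : Prop :=
  ∀ ε > 0, ∃ δ > 0, ∀ u ∈ Feasible μ U, ∀ ξ : X → EuclideanSpace ℝ (Fin m),
    PhiMem μ U DJ u ξ → ∫ x, ‖u x - ustar x‖ ∂μ ≤ κ →
    eLpNorm ξ ⊤ μ < ENNReal.ofReal δ → ∫ x, ‖u x - ustar x‖ ∂μ < ε

/-- `u*` is an isolated critical point with radius `δ`: every critical point within
`L¹`-distance `δ` of `u*` coincides (a.e.) with `u*`. -/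
def IsolatedCritAt {X : Type*} [MeasurableSpace X] {m : ℕ} (μ : Measure X)
    (U : Set (EuclideanSpace ℝ (Fin m)))
    (DJ : (X → EuclideanSpace ℝ (Fin m)) → X → EuclideanSpace ℝ (Fin m))
    (ustar : X → EuclideanSpace ℝ (Fin m)) (δ : ℝ) : Prop :=
  ∀ u ∈ Feasible μ U, PhiMem μ U DJ u 0 → ∫ x, ‖u x - ustar x‖ ∂μ ≤ δ →
    u =ᵐ[μ] ustar

/-!
Local minimality of `u_η` for the regularized problem gives, by differentiating along the feasible
segments `u_η + t (v - u_η)` (Gâteaux derivative of `𝒥`, dominated convergence for the penalty),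
the perturbed optimality condition `ξ_η ∈ d𝒥(u_η) + N_𝒰(u_η)` with
`ξ_η = -η ‖u_η‖^(p-2) u_η`. As `U` is bounded by some `M`, `‖ξ_η‖_∞ ≤ η M^(p-1)`, so for small
`η` strong subregularity at `u*` forces `‖u_η - u*‖_{L¹} < ε`.
-/

lemma nonneg_of_tendsto_slope_of_eventually_le {f : ℝ → ℝ} {c L : ℝ}
    (hmin : ∀ᶠ t in 𝓝[>] 0, c ≤ f t) (hf : Tendsto (fun t => (f t - c) / t) (𝓝[>] 0) (𝓝 L)) :
    0 ≤ L :=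
  ge_of_tendsto hf <| by
    filter_upwards [hmin, self_mem_nhdsWithin] with t hct ht
    exact div_nonneg (sub_nonneg.2 hct) (le_of_lt ht)

section Pointwise

variable {E : Type*} [NormedAddCommGroup E] [InnerProductSpace ℝ E] {p : ℝ}

lemma rpow_sub_one_mul_self {x : ℝ} (hx : 0 ≤ x) (hp : p ≠ 0) : x ^ (p - 1) * x = x ^ p := by
  rw [← Real.rpow_add_one' hx (by simpa using hp), sub_add_cancel]

-- the gradient of `w ↦ ‖w‖ ^ p / p`
noncomputable def gradNormRpow (p : ℝ) (w : E) : E := ‖w‖ ^ (p - 2) • w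

lemma norm_gradNormRpow (hp : 1 < p) (w : E) : ‖gradNormRpow p w‖ = ‖w‖ ^ (p - 1) := by
  rw [gradNormRpow, norm_smul, Real.norm_of_nonneg (by positivity), show p - 2 = p - 1 - 1 by ring,
    rpow_sub_one_mul_self (norm_nonneg w) (by linarith)]

lemma tendsto_slope_norm_add_smul_rpow (hp : 1 < p) (a b : E) :
    Tendsto (fun t : ℝ => (‖a + t • b‖ ^ p - ‖a‖ ^ p) / t) (𝓝[>] 0)
      (𝓝 (p * inner ℝ (gradNormRpow p a) b)) := by
  have hline : HasDerivAt (fun t : ℝ => a + t • b) b 0 := by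
    simpa using ((hasDerivAt_id (0:ℝ)).smul_const b).const_add a
  have hD := (hasFDerivAt_norm_rpow (a + (0:ℝ) • b) hp).comp_hasDerivAt 0 hline
  have := (hasDerivAt_iff_tendsto_slope.mp hD).mono_left (nhdsGT_le_nhdsNE 0)
  convert this using 2 with t
  · simp [slope_def_field]
  · simp [gradNormRpow, real_inner_smul_left]; ring

lemma abs_norm_rpow_sub_norm_rpow_le (hp : 1 < p) {M : ℝ} {a c : E} (ha : ‖a‖ ≤ M)
    (hc : ‖c‖ ≤ M) : |‖a‖ ^ p - ‖c‖ ^ p| ≤ p * M ^ (p - 1) * ‖a - c‖ := by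
  have hbound : ∀ x ∈ Metric.closedBall (0 : E) M,
      ‖fderiv ℝ (fun x : E => ‖x‖ ^ p) x‖ ≤ p * M ^ (p - 1) := by
    intro x hx
    rw [norm_fderiv_norm_id_rpow x hp]
    gcongr
    exact mem_closedBall_zero_iff.1 hx
  simpa [Real.norm_eq_abs] using (convex_closedBall (0 : E) M).norm_image_sub_le_of_norm_fderiv_le
    (fun x _ => differentiable_norm_rpow hp x) hbound (mem_closedBall_zero_iff.2 hc)
    (mem_closedBall_zero_iff.2 ha)

lemma abs_slope_norm_rpow_segment_le (hp : 1 < p) {M t : ℝ} {a c : E} (ha : ‖a‖ ≤ M)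
    (hc : ‖c‖ ≤ M) (ht : t ∈ Ioc 0 1) :
    |(‖a + t • (c - a)‖ ^ p - ‖a‖ ^ p) / t| ≤ p * M ^ (p - 1) * ‖c - a‖ := by
  have hseg : ‖a + t • (c - a)‖ ≤ M := mem_closedBall_zero_iff.1 <|
    (convex_closedBall (0 : E) M).add_smul_sub_mem (mem_closedBall_zero_iff.2 ha)
      (mem_closedBall_zero_iff.2 hc) (Ioc_subset_Icc_self ht)
  rw [abs_div, abs_of_pos ht.1, div_le_iff₀ ht.1]
  calc |‖a + t • (c - a)‖ ^ p - ‖a‖ ^ p| ≤ p * M ^ (p - 1) * ‖a + t • (c - a) - a‖ :=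
        abs_norm_rpow_sub_norm_rpow_le hp hseg ha
    _ = p * M ^ (p - 1) * ‖c - a‖ * t := by
        rw [add_sub_cancel_left, norm_smul, Real.norm_of_nonneg ht.1.le]; ring

end Pointwise

section Integrals

variable {X : Type*} [MeasurableSpace X] {μ : Measure X} {p M : ℝ}

lemma integrable_norm_rpow_of_ae_norm_le {F : Type*} [NormedAddCommGroup F] (hp : 1 ≤ p)
    {f : X → F} (hf : Integrable f μ) (hM : ∀ᵐ x ∂μ, ‖f x‖ ≤ M) :
    Integrable (fun x => ‖f x‖ ^ p) μ := by
  refine (hf.norm.const_mul (M ^ (p - 1))).mono'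
    (hf.aestronglyMeasurable.norm.aemeasurable.pow_const p).aestronglyMeasurable ?_
  filter_upwards [hM] with x hx
  rw [Real.norm_of_nonneg (by positivity), ← rpow_sub_one_mul_self (norm_nonneg _) (by linarith)]
  gcongr

variable {E : Type*} [NormedAddCommGroup E] [InnerProductSpace ℝ E]

lemma tendsto_slope_integral_norm_rpow (hp : 1 < p) {u v : X → E} (hu : Integrable u μ)
    (hv : Integrable v μ) (huM : ∀ᵐ x ∂μ, ‖u x‖ ≤ M) (hvM : ∀ᵐ x ∂μ, ‖v x‖ ≤ M) :
    Tendsto (fun t : ℝ => ((∫ x, ‖u x + t • (v x - u x)‖ ^ p ∂μ) - ∫ x, ‖u x‖ ^ p ∂μ) / t)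
      (𝓝[>] 0) (𝓝 (p * ∫ x, inner ℝ (gradNormRpow p (u x)) (v x - u x) ∂μ)) := by
  have hint : ∀ t ∈ Ioc (0 : ℝ) 1, Integrable (fun x => ‖u x + t • (v x - u x)‖ ^ p) μ := by
    intro t ht
    refine integrable_norm_rpow_of_ae_norm_le (M := M) hp.le (hu.add ((hv.sub hu).smul t)) ?_
    filter_upwards [huM, hvM] with x hux hvx
    exact mem_closedBall_zero_iff.1 <| (convex_closedBall (0 : E) M).add_smul_sub_mem
      (mem_closedBall_zero_iff.2 hux) (mem_closedBall_zero_iff.2 hvx) (Ioc_subset_Icc_self ht)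
  have hint₀ := integrable_norm_rpow_of_ae_norm_le hp.le hu huM
  have hsmall : ∀ᶠ t in 𝓝[>] (0 : ℝ), t ∈ Ioc 0 1 :=
    Ioc_mem_nhdsGT_of_mem ⟨le_rfl, zero_lt_one⟩
  have hdct : Tendsto (fun t : ℝ => ∫ x, (‖u x + t • (v x - u x)‖ ^ p - ‖u x‖ ^ p) / t ∂μ)
      (𝓝[>] 0) (𝓝 (∫ x, p * inner ℝ (gradNormRpow p (u x)) (v x - u x) ∂μ)) := by
    refine tendsto_integral_filter_of_dominated_convergence
      (fun x => p * M ^ (p - 1) * ‖v x - u x‖) ?_ ?_ ((hv.sub hu).norm.const_mul _) ?_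
    · filter_upwards [hsmall] with t ht
      exact (((hint t ht).sub hint₀).div_const t).aestronglyMeasurable
    · filter_upwards [hsmall] with t ht
      filter_upwards [huM, hvM] with x hux hvx
      exact abs_slope_norm_rpow_segment_le hp hux hvx ht
    · exact ae_of_all _ fun x => tendsto_slope_norm_add_smul_rpow hp (u x) (v x - u x)
  rw [integral_const_mul] at hdct
  refine hdct.congr' ?_
  filter_upwards [hsmall] with t ht
  rw [integral_div, integral_sub (hint t ht) hint₀]

lemma MeasureTheory.MemLp.integrable_inner {f g : X → E} (hf : MemLp f ⊤ μ)
    (hg : Integrable g μ) : Integrable (fun x => inner ℝ (f x) (g x)) μ := by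
  rw [← memLp_one_iff_integrable] at hg ⊢
  exact hf.of_bilin (fun a b => inner ℝ a b) 1 hg (hf.1.inner hg.1)
    (ae_of_all _ fun x => by simpa using nnnorm_inner_le_nnnorm (𝕜 := ℝ) (f x) (g x))

lemma MeasureTheory.AEStronglyMeasurable.gradNormRpow [MeasurableSpace E] [BorelSpace E]
    [SecondCountableTopology E] {f : X → E} (hf : AEStronglyMeasurable f μ) :
    AEStronglyMeasurable (fun x => gradNormRpow p (f x)) μ :=
  ((hf.aemeasurable.norm.pow_const (p - 2)).smul hf.aemeasurable).aestronglyMeasurable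

end Integrals

section FirstOrder

def HasGateauxDerivOn {X : Type*} [MeasurableSpace X] {m : ℕ} (μ : Measure X)
    (U : Set (EuclideanSpace ℝ (Fin m))) (J : (X → EuclideanSpace ℝ (Fin m)) → ℝ)
    (DJ : (X → EuclideanSpace ℝ (Fin m)) → X → EuclideanSpace ℝ (Fin m)) : Prop :=
  ∀ u ∈ Feasible μ U, ∀ v : X → EuclideanSpace ℝ (Fin m), u + v ∈ Feasible μ U →
    Tendsto (fun t : ℝ => (J (u + t • v) - J u) / t) (𝓝[>] 0)
      (𝓝 (∫ x, (inner ℝ (DJ u x) (v x) : ℝ) ∂μ))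

def IsLocalMinRegularized {X : Type*} [MeasurableSpace X] {m : ℕ} (μ : Measure X)
    (U : Set (EuclideanSpace ℝ (Fin m))) (J : (X → EuclideanSpace ℝ (Fin m)) → ℝ) (p η : ℝ)
    (u : X → EuclideanSpace ℝ (Fin m)) : Prop :=
  ∃ r > 0, ∀ w ∈ Feasible μ U, ∫ x, ‖w x - u x‖ ∂μ ≤ r →
    J u + (η / p) * ∫ x, ‖u x‖ ^ p ∂μ ≤ J w + (η / p) * ∫ x, ‖w x‖ ^ p ∂μ

variable {X : Type*} [MeasurableSpace X] {m : ℕ} {μ : Measure X}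
  {U : Set (EuclideanSpace ℝ (Fin m))} {J : (X → EuclideanSpace ℝ (Fin m)) → ℝ}
  {DJ : (X → EuclideanSpace ℝ (Fin m)) → X → EuclideanSpace ℝ (Fin m)} {p η M : ℝ}
  {u v : X → EuclideanSpace ℝ (Fin m)}

lemma ae_norm_le_of_mem_feasible (hM : ∀ w ∈ U, ‖w‖ ≤ M) (hu : u ∈ Feasible μ U) :
    ∀ᵐ x ∂μ, ‖u x‖ ≤ M :=
  hu.2.mono fun _ hx => hM _ hx

lemma add_smul_sub_mem_feasible (hUconv : Convex ℝ U) (hu : u ∈ Feasible μ U)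
    (hv : v ∈ Feasible μ U) {t : ℝ} (ht : t ∈ Icc 0 1) : u + t • (v - u) ∈ Feasible μ U :=
  ⟨hu.1.add ((hv.1.sub hu.1).smul t), by
    filter_upwards [hu.2, hv.2] with _ hux hvx
    exact hUconv.add_smul_sub_mem hux hvx ht⟩

lemma ae_norm_gradNormRpow_le (hp : 1 < p) (hM : ∀ w ∈ U, ‖w‖ ≤ M) (hu : u ∈ Feasible μ U) :
    ∀ᵐ x ∂μ, ‖gradNormRpow p (u x)‖ ≤ M ^ (p - 1) := by
  filter_upwards [ae_norm_le_of_mem_feasible hM hu] with x hx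
  rw [norm_gradNormRpow hp]
  exact Real.rpow_le_rpow (norm_nonneg _) hx (by linarith)

lemma memLp_top_gradNormRpow (hp : 1 < p) (hM : ∀ w ∈ U, ‖w‖ ≤ M) (hu : u ∈ Feasible μ U) :
    MemLp (fun x => gradNormRpow p (u x)) ⊤ μ :=
  memLp_top_of_bound hu.1.1.gradNormRpow _ (ae_norm_gradNormRpow_le hp hM hu)

lemma eLpNorm_top_smul_gradNormRpow_le (hp : 1 < p) (hM : ∀ w ∈ U, ‖w‖ ≤ M)
    (hu : u ∈ Feasible μ U) (c : ℝ) :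
    eLpNorm (fun x => c • gradNormRpow p (u x)) ⊤ μ ≤ ENNReal.ofReal (|c| * M ^ (p - 1)) := by
  rw [eLpNorm_exponent_top]
  refine eLpNormEssSup_le_of_ae_bound ?_
  filter_upwards [ae_norm_gradNormRpow_le hp hM hu] with x hx
  rw [norm_smul, Real.norm_eq_abs]
  gcongr

lemma integral_inner_add_smul_gradNormRpow_nonneg (hM : ∀ w ∈ U, ‖w‖ ≤ M)
    (hUconv : Convex ℝ U)
    (hGateaux : HasGateauxDerivOn μ U J DJ) (hp : 1 < p) (hu : u ∈ Feasible μ U)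
    (hmin : IsLocalMinRegularized μ U J p η u)
    (hv : v ∈ Feasible μ U) :
    0 ≤ (∫ x, inner ℝ (DJ u x) (v x - u x) ∂μ) +
      η * ∫ x, inner ℝ (gradNormRpow p (u x)) (v x - u x) ∂μ := by
  obtain ⟨r, hr, hmin⟩ := hmin
  have hJ := hGateaux u hu (v - u) (by rwa [add_sub_cancel])
  have hpen := tendsto_slope_integral_norm_rpow hp hu.1 hv.1
    (ae_norm_le_of_mem_feasible hM hu) (ae_norm_le_of_mem_feasible hM hv)
  set B := ∫ x, ‖v x - u x‖ ∂μ
  have hnear : ∀ᶠ t in 𝓝[>] (0 : ℝ), t ∈ Ioc 0 1 ∧ t * B ≤ r := by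
    have hB : Tendsto (fun t : ℝ => t * B) (𝓝[>] 0) (𝓝 0) := by
      simpa using ((continuous_mul_const B).tendsto 0).mono_left nhdsWithin_le_nhds
    have h01 : ∀ᶠ t in 𝓝[>] (0 : ℝ), t ∈ Ioc 0 1 := Ioc_mem_nhdsGT_of_mem ⟨le_rfl, zero_lt_one⟩
    exact h01.and (hB.eventually (Iic_mem_nhds hr))
  refine nonneg_of_tendsto_slope_of_eventually_le
    (f := fun t => J (u + t • (v - u)) + (η / p) * ∫ x, ‖u x + t • (v x - u x)‖ ^ p ∂μ)
    (c := J u + (η / p) * ∫ x, ‖u x‖ ^ p ∂μ) ?_ ?_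
  · filter_upwards [hnear] with t ⟨ht, htB⟩
    refine hmin _ (add_smul_sub_mem_feasible hUconv hu hv (Ioc_subset_Icc_self ht)) ?_
    calc ∫ x, ‖(u + t • (v - u)) x - u x‖ ∂μ = t * B := by
          simp only [Pi.add_apply, Pi.smul_apply, Pi.sub_apply, add_sub_cancel_left, norm_smul,
            Real.norm_of_nonneg ht.1.le, integral_const_mul, B]
      _ ≤ r := htB
  · convert hJ.add (hpen.const_mul (η / p)) using 2 with t
    · ring
    · rw [← mul_assoc, div_mul_cancel₀ _ (by linarith : p ≠ 0)]
      rfl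

theorem phiMem_of_isLocalMinRegularized (hM : ∀ w ∈ U, ‖w‖ ≤ M) (hUconv : Convex ℝ U)
    (hDJinf : ∀ u ∈ Feasible μ U, MemLp (DJ u) ⊤ μ)
    (hGateaux : HasGateauxDerivOn μ U J DJ) (hp : 1 < p) (hu : u ∈ Feasible μ U)
    (hmin : IsLocalMinRegularized μ U J p η u) :
    PhiMem μ U DJ u (fun x => -η • gradNormRpow p (u x)) := by
  have hgrad := memLp_top_gradNormRpow hp hM hu
  refine ⟨hgrad.const_smul (-η), fun v hv => ?_⟩
  have hb : Integrable (fun x => v x - u x) μ := hv.1.sub hu.1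
  calc ∫ x, inner ℝ (-η • gradNormRpow p (u x) - DJ u x) (v x - u x) ∂μ
      = -((∫ x, inner ℝ (DJ u x) (v x - u x) ∂μ) +
          η * ∫ x, inner ℝ (gradNormRpow p (u x)) (v x - u x) ∂μ) := by
        rw [← integral_const_mul, ← integral_add ((hDJinf u hu).integrable_inner hb)
          ((hgrad.integrable_inner hb).const_mul η), ← integral_neg]
        congr 1 with x
        simp only [inner_sub_left, real_inner_smul_left]
        ring
    _ ≤ 0 := neg_nonpos.2 <|
        integral_inner_add_smul_gradNormRpow_nonneg hM hUconv hGateaux hp hu hmin hv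

end FirstOrder

theorem stmt_19_general {X : Type*} [MeasurableSpace X] {m : ℕ} (μ : Measure X)
    (U : Set (EuclideanSpace ℝ (Fin m)))
    (hUcpt : IsCompact U) (hUconv : Convex ℝ U)
    (J : (X → EuclideanSpace ℝ (Fin m)) → ℝ)
    (DJ : (X → EuclideanSpace ℝ (Fin m)) → X → EuclideanSpace ℝ (Fin m))
    (hDJinf : ∀ u ∈ Feasible μ U, MemLp (DJ u) ⊤ μ)
    (hGateaux : ∀ u ∈ Feasible μ U, ∀ v : X → EuclideanSpace ℝ (Fin m),
      u + v ∈ Feasible μ U →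
      Tendsto (fun t : ℝ => (J (u + t • v) - J u) / t) (𝓝[>] 0)
        (𝓝 (∫ x, (inner ℝ (DJ u x) (v x) : ℝ) ∂μ)))
    (ustar : X → EuclideanSpace ℝ (Fin m))
    (κhat : ℝ) (hsubreg : SubregAt μ U DJ ustar κhat)
    (p : ℝ) (hp : 1 < p) :
    ∀ ε > 0, ∃ ηε > 0, ∀ η : ℝ, 0 < η → η < ηε →
      ∀ uη ∈ Feasible μ U,
        (∃ r > 0, ∀ u ∈ Feasible μ U, ∫ x, ‖u x - uη x‖ ∂μ ≤ r →
          J uη + (η / p) * ∫ x, ‖uη x‖ ^ p ∂μ ≤ J u + (η / p) * ∫ x, ‖u x‖ ^ p ∂μ) →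
        ∫ x, ‖uη x - ustar x‖ ∂μ < κhat →
        ∫ x, ‖uη x - ustar x‖ ∂μ < ε := by
  intro ε hε
  obtain ⟨δ, hδ, hsubreg⟩ := hsubreg ε hε
  obtain ⟨M, hM₀, hM⟩ := hUcpt.isBounded.exists_pos_norm_le
  refine ⟨δ / M ^ (p - 1), by positivity, fun η hη hηε uη huη hmin hκ => ?_⟩
  refine hsubreg uη huη _
    (phiMem_of_isLocalMinRegularized hM hUconv hDJinf hGateaux hp huη hmin) hκ.le ?_
  calc eLpNorm (fun x => -η • gradNormRpow p (uη x)) ⊤ μ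
      ≤ ENNReal.ofReal (|-η| * M ^ (p - 1)) := eLpNorm_top_smul_gradNormRpow_le hp hM huη (-η)
    _ < ENNReal.ofReal δ := by
        rw [ENNReal.ofReal_lt_ofReal_iff hδ, abs_neg, abs_of_pos hη]
        exact (lt_div_iff₀ (by positivity)).1 hηε

/-- **stability of `p`-regularization.** If the optimality mapping is
strongly subregular at a critical point `u*` with radius `κ̂ > 0`, then for every
`ε > 0` there is `η_ε > 0` such that for `0 < η < η_ε`, every local minimizer `u_η`
of the regularized problem `min 𝒥(u) + (η/p)∫|u|ᵖ dμ` with `‖u_η − u*‖_{L¹} < κ̂`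
satisfies `‖u_η − u*‖_{L¹} < ε`. -/
theorem stmt_19 {X : Type*} [MeasurableSpace X] {m : ℕ} (μ : Measure X)
    [IsFiniteMeasure μ] [NullSingletonClass μ]
    (U : Set (EuclideanSpace ℝ (Fin m)))
    (hUcpt : IsCompact U) (hUconv : Convex ℝ U) (hUnt : U.Nontrivial)
    (J : (X → EuclideanSpace ℝ (Fin m)) → ℝ) (hJ : WeakSeqContinuousOn μ U J)
    (DJ : (X → EuclideanSpace ℝ (Fin m)) → X → EuclideanSpace ℝ (Fin m))
    (hDJinf : ∀ u ∈ Feasible μ U, MemLp (DJ u) ⊤ μ)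
    (hGateaux : ∀ u ∈ Feasible μ U, ∀ v : X → EuclideanSpace ℝ (Fin m),
      u + v ∈ Feasible μ U →
      Tendsto (fun t : ℝ => (J (u + t • v) - J u) / t) (𝓝[>] 0)
        (𝓝 (∫ x, (inner ℝ (DJ u x) (v x) : ℝ) ∂μ)))
    (hWS : ∀ (un : ℕ → X → EuclideanSpace ℝ (Fin m)) (u : X → EuclideanSpace ℝ (Fin m)),
      (∀ n, un n ∈ Feasible μ U) → u ∈ Feasible μ U → WeakL1Conv μ un u →
      Tendsto (fun n => eLpNorm (fun x => DJ (un n) x - DJ u x) ⊤ μ) atTop (𝓝 0))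
    (ustar : X → EuclideanSpace ℝ (Fin m)) (hustar : ustar ∈ Feasible μ U)
    (hcrit : PhiMem μ U DJ ustar 0)
    (κhat : ℝ) (hκhat : 0 < κhat) (hsubreg : SubregAt μ U DJ ustar κhat)
    (p : ℝ) (hp : 1 < p) :
    ∀ ε > 0, ∃ ηε > 0, ∀ η : ℝ, 0 < η → η < ηε →
      ∀ uη ∈ Feasible μ U,
        (∃ r > 0, ∀ u ∈ Feasible μ U, ∫ x, ‖u x - uη x‖ ∂μ ≤ r →
          J uη + (η / p) * ∫ x, ‖uη x‖ ^ p ∂μ ≤ J u + (η / p) * ∫ x, ‖u x‖ ^ p ∂μ) →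
        ∫ x, ‖uη x - ustar x‖ ∂μ < κhat →
        ∫ x, ‖uη x - ustar x‖ ∂μ < ε :=
  stmt_19_general μ U hUcpt hUconv J DJ hDJinf hGateaux ustar κhat hsubreg p hp
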